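/- Under the hypotheses of the previous statement, the matrix M also satisfies the lower bound ‖UUᵀ M VVᵀ‖_F ≥ (1 − 2 max{‖UUᵀ − U*U*ᵀ‖, ‖VVᵀ − V*V*ᵀ‖}) ‖M‖_F. In particular, if the max of the two subspace distances is at most 0.05, then ‖Uᵀ M V‖_F ≥ 0.9 ‖M‖_F. -/

import Mathlib

open Matrix Finset

/-- Euclidean norm of a vector. -/
noncomputable def enorm {ι : Type*} [Fintype ι] (x : ι → ℝ) : ℝ :=
  Real.sqrt (∑ i, x i ^ 2)

/-- Frobenius norm of a matrix. -/
noncomputable def frob {ι κ : Type*} [Fintype ι] [Fintype κ] (A : Matrix ι κ ℝ) : ℝ :=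
  Real.sqrt (∑ i, ∑ j, A i j ^ 2)

/-- Matrix inner product ⟨A,B⟩ = Tr(AᵀB). -/
noncomputable def minner {ι κ : Type*} [Fintype ι] [Fintype κ] (A B : Matrix ι κ ℝ) : ℝ :=
  ∑ i, ∑ j, A i j * B i j

/-- The k-th largest singular value, via the Courant–Fischer max-min characterization. -/
noncomputable def sval {ι κ : Type*} [Fintype ι] [Fintype κ] (A : Matrix ι κ ℝ) (k : ℕ) : ℝ :=
  sSup {t : ℝ | ∃ V : Submodule ℝ (κ → ℝ), Module.finrank ℝ V = k ∧
    ∀ x ∈ V, t * _root_.enorm x ≤ _root_.enorm (A.mulVec x)}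

/-- Spectral (operator) norm = largest singular value. -/
noncomputable def spec {ι κ : Type*} [Fintype ι] [Fintype κ] (A : Matrix ι κ ℝ) : ℝ :=
  sval A 1

/-!
Write `P = UUᵀ`, `P⋆ = U⋆U⋆ᵀ`, `Q = VVᵀ`, `Q⋆ = V⋆V⋆ᵀ`. The hypothesis on `M` gives `P⋆M = M = MQ⋆`,
hence `M - PMQ = (P⋆ - P)M + PM(Q⋆ - Q)`. Since `‖AB‖_F ≤ ‖A‖₂‖B‖_F`, `‖BA‖_F ≤ ‖B‖_F‖A‖₂`
and the orthogonal projection `P` has `‖P‖₂ ≤ 1`, this gives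
`‖M - PMQ‖_F ≤ (‖P - P⋆‖₂ + ‖Q - Q⋆‖₂)‖M‖_F`, and the triangle inequality yields the lower
bound. Finally `‖UᵀMV‖_F = ‖U(UᵀMV)Vᵀ‖_F` because `U` and `V` have orthonormal columns.
-/

section L2OpNorm

open scoped Matrix.Norms.L2Operator

variable {ι κ : Type*} [Fintype ι] [Fintype κ]

lemma enorm_eq_norm_toLp (x : ι → ℝ) : _root_.enorm x = ‖WithLp.toLp 2 x‖ := by
  simp [_root_.enorm, EuclideanSpace.norm_eq]

lemma spec_eq_sSup (A : Matrix ι κ ℝ) :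
    spec A = sSup {t | ∃ x ≠ 0, t * _root_.enorm x ≤ _root_.enorm (A *ᵥ x)} := by
  unfold spec sval
  congr 1
  ext t
  constructor
  · rintro ⟨W, hW, ht⟩
    have : W ≠ ⊥ := by rintro rfl; simp at hW
    obtain ⟨x, hxW, hx⟩ := W.exists_mem_ne_zero_of_ne_bot this
    exact ⟨x, hx, ht x hxW⟩
  · rintro ⟨x, hx, ht⟩
    refine ⟨ℝ ∙ x, finrank_span_singleton hx, fun y hy => ?_⟩
    obtain ⟨c, rfl⟩ := Submodule.mem_span_singleton.mp hy
    simp only [enorm_eq_norm_toLp, mulVec_smul, WithLp.toLp_smul, norm_smul] at ht ⊢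
    rw [mul_left_comm]
    exact mul_le_mul_of_nonneg_left ht (norm_nonneg c)

lemma enorm_mulVec_le_l2_opNorm [DecidableEq κ] (A : Matrix ι κ ℝ) (x : κ → ℝ) :
    _root_.enorm (A *ᵥ x) ≤ ‖A‖ * _root_.enorm x := by
  rw [enorm_eq_norm_toLp, enorm_eq_norm_toLp]
  exact A.l2_opNorm_mulVec (WithLp.toLp 2 x)

lemma spec_eq_l2_opNorm [DecidableEq κ] (A : Matrix ι κ ℝ) : spec A = ‖A‖ := by
  rw [spec_eq_sSup]
  set S := {t | ∃ x ≠ 0, t * _root_.enorm x ≤ _root_.enorm (A *ᵥ x)}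
  have hS : ∀ t ∈ S, t ≤ ‖A‖ := by
    rintro t ⟨x, hx, ht⟩
    have hpos : 0 < _root_.enorm x := by rw [enorm_eq_norm_toLp]; simpa using hx
    exact le_of_mul_le_mul_right (ht.trans (enorm_mulVec_le_l2_opNorm A x)) hpos
  have hbdd : BddAbove S := ⟨‖A‖, hS⟩
  have h0 : 0 ≤ sSup S := by
    rcases S.eq_empty_or_nonempty with h | ⟨_, x, hx, _⟩
    · rw [h, Real.sSup_empty]
    · exact le_csSup hbdd ⟨x, hx, by rw [zero_mul, enorm_eq_norm_toLp]; positivity⟩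
  have hbound : ∀ x, _root_.enorm (A *ᵥ x) ≤ sSup S * _root_.enorm x := by
    intro x
    rcases eq_or_ne x 0 with rfl | hx
    · simp [enorm_eq_norm_toLp]
    have hpos : 0 < _root_.enorm x := by rw [enorm_eq_norm_toLp]; simpa using hx
    rw [← div_le_iff₀ hpos]
    exact le_csSup hbdd ⟨x, hx, (div_mul_cancel₀ _ hpos.ne').le⟩
  refine le_antisymm (Real.sSup_le hS (norm_nonneg A)) ?_
  rw [l2_opNorm_def]
  refine ContinuousLinearMap.opNorm_le_bound _ h0 fun x => ?_
  have hx := hbound x.ofLp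
  rw [enorm_eq_norm_toLp, enorm_eq_norm_toLp, WithLp.toLp_ofLp] at hx
  exact hx

lemma spec_nonneg (A : Matrix ι κ ℝ) : 0 ≤ spec A := by
  classical
  exact spec_eq_l2_opNorm A ▸ norm_nonneg A

lemma enorm_mulVec_le_spec (A : Matrix ι κ ℝ) (x : κ → ℝ) :
    _root_.enorm (A *ᵥ x) ≤ spec A * _root_.enorm x := by
  classical
  exact spec_eq_l2_opNorm A ▸ enorm_mulVec_le_l2_opNorm A x

lemma spec_transpose (A : Matrix ι κ ℝ) : spec Aᵀ = spec A := by
  classical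
  rw [spec_eq_l2_opNorm, spec_eq_l2_opNorm, ← conjTranspose_eq_transpose_of_trivial,
    l2_opNorm_conjTranspose]

lemma spec_sub_comm (A B : Matrix ι κ ℝ) : spec (A - B) = spec (B - A) := by
  classical
  rw [spec_eq_l2_opNorm, spec_eq_l2_opNorm, norm_sub_rev]

/-- The C⋆-identity gives `‖P‖ = ‖Pᴴ P‖ = ‖P‖ ^ 2`. -/
lemma spec_le_one_of_isHermitian_of_isIdempotentElem {P : Matrix ι ι ℝ} (hP : P.IsHermitian)
    (hP' : IsIdempotentElem P) : spec P ≤ 1 := by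
  classical
  have h := l2_opNorm_conjTranspose_mul_self P
  rw [hP.eq, hP'.eq] at h
  rw [spec_eq_l2_opNorm]
  nlinarith [norm_nonneg P]

end L2OpNorm

section Frobenius

attribute [local instance] Matrix.frobeniusNormedAddCommGroup

variable {ι κ : Type*} [Fintype ι] [Fintype κ]

lemma frob_eq_norm (A : Matrix ι κ ℝ) : frob A = ‖A‖ := by
  simp [frob, frobenius_norm_def, Real.sqrt_eq_rpow]

lemma frob_nonneg (A : Matrix ι κ ℝ) : 0 ≤ frob A :=
  Real.sqrt_nonneg _

lemma frob_le_frob_sub_add (A B : Matrix ι κ ℝ) : frob A ≤ frob (A - B) + frob B := by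
  simp only [frob_eq_norm]
  exact norm_le_norm_sub_add A B

lemma frob_add_le (A B : Matrix ι κ ℝ) : frob (A + B) ≤ frob A + frob B := by
  simp only [frob_eq_norm]
  exact norm_add_le A B

lemma frob_transpose (A : Matrix ι κ ℝ) : frob Aᵀ = frob A := by
  simp only [frob_eq_norm]
  exact frobenius_norm_transpose A

end Frobenius

lemma transpose_mul_apply {ι κ μ R : Type*} [Fintype κ] [NonUnitalNonAssocSemiring R]
    (A : Matrix ι κ R) (B : Matrix κ μ R) (j : μ) : (A * B)ᵀ j = A *ᵥ Bᵀ j := by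
  ext i
  simp [mul_apply, mulVec, dotProduct]

section FrobeniusSpec

variable {ι κ μ ν : Type*} [Fintype ι] [Fintype κ] [Fintype μ] [Fintype ν]

lemma frob_sq_eq_sum_enorm_sq (A : Matrix ι κ ℝ) :
    frob A ^ 2 = ∑ j, _root_.enorm (Aᵀ j) ^ 2 := by
  rw [frob, Real.sq_sqrt (by positivity), Finset.sum_comm]
  refine Finset.sum_congr rfl fun j _ => ?_
  rw [_root_.enorm, Real.sq_sqrt (by positivity)]
  rfl

lemma frob_mul_le_spec_mul_frob (A : Matrix ι κ ℝ) (B : Matrix κ μ ℝ) :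
    frob (A * B) ≤ spec A * frob B := by
  refine le_of_sq_le_sq ?_ (mul_nonneg (spec_nonneg A) (frob_nonneg B))
  rw [mul_pow, frob_sq_eq_sum_enorm_sq, frob_sq_eq_sum_enorm_sq, Finset.mul_sum]
  refine Finset.sum_le_sum fun j _ => ?_
  rw [transpose_mul_apply, ← mul_pow]
  exact pow_le_pow_left₀ (by rw [enorm_eq_norm_toLp]; positivity) (enorm_mulVec_le_spec A _) 2

lemma frob_mul_le_frob_mul_spec (A : Matrix ι κ ℝ) (B : Matrix κ μ ℝ) :
    frob (A * B) ≤ frob A * spec B := by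
  rw [← frob_transpose, transpose_mul, ← frob_transpose A, ← spec_transpose B, mul_comm]
  exact frob_mul_le_spec_mul_frob Bᵀ Aᵀ

lemma enorm_mulVec_of_orthonormal [DecidableEq κ] {U : Matrix ι κ ℝ}
    (hU : Uᵀ * U = 1) (x : κ → ℝ) : _root_.enorm (U *ᵥ x) = _root_.enorm x := by
  have h : (U *ᵥ x) ⬝ᵥ (U *ᵥ x) = x ⬝ᵥ x := by
    rw [dotProduct_mulVec, ← mulVec_transpose, dotProduct_comm, mulVec_mulVec, hU, one_mulVec]
  simp only [_root_.enorm, sq]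
  exact congrArg Real.sqrt h

lemma frob_mul_of_orthonormal [DecidableEq κ] {U : Matrix ι κ ℝ} (hU : Uᵀ * U = 1)
    (A : Matrix κ μ ℝ) : frob (U * A) = frob A := by
  rw [← sq_eq_sq₀ (frob_nonneg _) (frob_nonneg _), frob_sq_eq_sum_enorm_sq,
    frob_sq_eq_sum_enorm_sq]
  simp only [transpose_mul_apply, enorm_mulVec_of_orthonormal hU]

lemma frob_mul_mul_transpose_of_orthonormal [DecidableEq μ] [DecidableEq ν]
    {U : Matrix ι μ ℝ} {V : Matrix κ ν ℝ} (hU : Uᵀ * U = 1) (hV : Vᵀ * V = 1)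
    (A : Matrix μ ν ℝ) : frob (U * A * Vᵀ) = frob A := by
  rw [← frob_transpose, transpose_mul, transpose_transpose, frob_mul_of_orthonormal hV,
    frob_transpose, frob_mul_of_orthonormal hU]

end FrobeniusSpec

lemma isIdempotentElem_mul_transpose_self {ι κ R : Type*} [Fintype ι] [Fintype κ]
    [DecidableEq κ] [Semiring R] {U : Matrix ι κ R} (hU : Uᵀ * U = 1) :
    IsIdempotentElem (U * Uᵀ) := by
  rw [IsIdempotentElem, Matrix.mul_assoc, ← Matrix.mul_assoc Uᵀ, hU, Matrix.one_mul]

section Perturbation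

variable {ι κ : Type*} [Fintype ι] [Fintype κ]

lemma mul_eq_self_of_eq_mul_mul {R : Type*} [Ring R] {P : Matrix ι ι R} {Q : Matrix κ κ R}
    {M : Matrix ι κ R} (hP : IsIdempotentElem P) (hQ : IsIdempotentElem Q) (hM : M = P * M * Q) :
    P * M = M ∧ M * Q = M := by
  constructor
  · conv_lhs => rw [hM]
    rw [← Matrix.mul_assoc, ← Matrix.mul_assoc, hP.eq, ← hM]
  · conv_lhs => rw [hM]
    rw [Matrix.mul_assoc, hQ.eq, ← hM]

lemma sub_mul_mul_eq {R : Type*} [Ring R] {P P' : Matrix ι ι R} {Q Q' : Matrix κ κ R}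
    {M : Matrix ι κ R} (hP' : P' * M = M) (hQ' : M * Q' = M) :
    M - P * M * Q = (P' - P) * M + P * (M * (Q' - Q)) := by
  rw [Matrix.sub_mul, hP', Matrix.mul_sub, hQ', Matrix.mul_sub, Matrix.mul_assoc]
  abel

lemma frob_sub_mul_mul_le {P P' : Matrix ι ι ℝ} {Q Q' : Matrix κ κ ℝ} {M : Matrix ι κ ℝ}
    (hP : P.IsHermitian) (hP₂ : IsIdempotentElem P) (hP' : P' * M = M) (hQ' : M * Q' = M) :
    frob (M - P * M * Q) ≤ (spec (P - P') + spec (Q - Q')) * frob M := by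
  calc frob (M - P * M * Q) = frob ((P' - P) * M + P * (M * (Q' - Q))) := by
        rw [sub_mul_mul_eq hP' hQ']
    _ ≤ frob ((P' - P) * M) + frob (P * (M * (Q' - Q))) := frob_add_le _ _
    _ ≤ spec (P' - P) * frob M + spec P * (frob M * spec (Q' - Q)) := by
        gcongr
        · exact frob_mul_le_spec_mul_frob _ _
        · exact (frob_mul_le_spec_mul_frob _ _).trans
            (mul_le_mul_of_nonneg_left (frob_mul_le_frob_mul_spec _ _) (spec_nonneg P))
    _ ≤ spec (P' - P) * frob M + 1 * (frob M * spec (Q' - Q)) := by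
        gcongr
        · exact mul_nonneg (frob_nonneg M) (spec_nonneg _)
        · exact spec_le_one_of_isHermitian_of_isIdempotentElem hP hP₂
    _ = (spec (P - P') + spec (Q - Q')) * frob M := by
        rw [spec_sub_comm P', spec_sub_comm Q']
        ring

lemma le_frob_mul_mul {P P' : Matrix ι ι ℝ} {Q Q' : Matrix κ κ ℝ} {M : Matrix ι κ ℝ}
    (hP : P.IsHermitian) (hP₂ : IsIdempotentElem P) (hP' : P' * M = M) (hQ' : M * Q' = M) :
    (1 - (spec (P - P') + spec (Q - Q'))) * frob M ≤ frob (P * M * Q) := by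
  have := frob_sub_mul_mul_le (Q := Q) hP hP₂ hP' hQ'
  linarith [frob_le_frob_sub_add M (P * M * Q)]

end Perturbation

/-- Stmt 10: under the hypotheses of Stmt 9, the lower bound
‖UUᵀMVVᵀ‖_F ≥ (1 − 2·maxdist)‖M‖_F holds; in particular if maxdist ≤ 0.05 then
‖UᵀMV‖_F ≥ 0.9‖M‖_F. -/
theorem stmt10 (n₁ n₂ R : ℕ)
    (U Ustar : Matrix (Fin n₁) (Fin R) ℝ) (V Vstar : Matrix (Fin n₂) (Fin R) ℝ)
    (hU : Uᵀ * U = 1) (hUs : Ustarᵀ * Ustar = 1)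
    (hV : Vᵀ * V = 1) (hVs : Vstarᵀ * Vstar = 1)
    (M : Matrix (Fin n₁) (Fin n₂) ℝ)
    (hM : M = Ustar * Ustarᵀ * M * Vstar * Vstarᵀ) :
    frob (U * Uᵀ * M * V * Vᵀ) ≥
      (1 - 2 * max (spec (U * Uᵀ - Ustar * Ustarᵀ)) (spec (V * Vᵀ - Vstar * Vstarᵀ))) * frob M ∧
    (max (spec (U * Uᵀ - Ustar * Ustarᵀ)) (spec (V * Vᵀ - Vstar * Vstarᵀ)) ≤ 0.05 →
      frob (Uᵀ * M * V) ≥ 0.9 * frob M) := by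
  set a := spec (U * Uᵀ - Ustar * Ustarᵀ)
  set b := spec (V * Vᵀ - Vstar * Vstarᵀ)
  obtain ⟨hUsM, hMVs⟩ := mul_eq_self_of_eq_mul_mul (isIdempotentElem_mul_transpose_self hUs)
    (isIdempotentElem_mul_transpose_self hVs) (M := M) (by rw [← Matrix.mul_assoc]; exact hM)
  have hlow := le_frob_mul_mul (Q := V * Vᵀ)
    (conjTranspose_eq_transpose_of_trivial U ▸ isHermitian_mul_conjTranspose_self U)
    (isIdempotentElem_mul_transpose_self hU) hUsM hMVs
  have hmain : (1 - 2 * max a b) * frob M ≤ frob (U * Uᵀ * M * V * Vᵀ) := by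
    rw [Matrix.mul_assoc (U * Uᵀ * M)]
    nlinarith [frob_nonneg M, le_max_left a b, le_max_right a b]
  have hiso : frob (Uᵀ * M * V) = frob (U * Uᵀ * M * V * Vᵀ) := by
    rw [← frob_mul_mul_transpose_of_orthonormal hU hV (Uᵀ * M * V)]
    simp only [Matrix.mul_assoc]
  refine ⟨hmain, fun hab => ?_⟩
  rw [ge_iff_le, hiso]
  calc 0.9 * frob M ≤ (1 - 2 * max a b) * frob M := by
        gcongr
        · exact frob_nonneg M
        · linarith [show (0.9 : ℝ) = 1 - 2 * 0.05 by norm_num]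
    _ ≤ _ := hmain
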